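/- arXiv:2401.17665 — 3 statements merged into one kernel-verified Lean document; each statement's English description precedes it below -/
import Mathlib

section
/- Let a, h, α > 0, 0 < k < h, ζ ≥ 0, and f(x) := 0 for |x| < k and f(x) := (|x| − k)^ζ for k ≤ |x| < h. Let γ_a := (α + (1/√a)·∫₀ʰ f(y)·sinh((h − y)/√a) dy) / cosh(h/√a). Then γ_a ~ Γ(1 + ζ)·a^{ζ/2}·e^{−k/√a} as a → 0⁺, i.e., the ratio γ_a / (Γ(1 + ζ)·a^{ζ/2}·e^{−k/√a}) tends to 1. -/
/-!
Write `ε = √a`. Only `y ≥ k` contributes to the integral, and there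
`sinh = (eˣ - e⁻ˣ)/2`. The substitution `y = k + εu` turns the growing half into
`e^{(h-k)/ε} ε^{ζ+1} ∫₀^{(h-k)/ε} e⁻ᵘ u^ζ du`, whose integral factor tends to
`Γ(1+ζ)`; with `cosh(h/ε) ~ e^{h/ε}/2` this is the claimed main term. The `α` term and the
decaying half of `sinh` (a bounded integral) are smaller by a factor
`O(ε^{-ζ-1} e^{-(h-k)/ε}) → 0`.
-/

open Set Filter Real MeasureTheory
open scoped Topology

noncomputable section

lemma tendsto_const_div_nhdsGT_zero_atTop {c : ℝ} (hc : 0 < c) :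
    Tendsto (fun ε : ℝ => c / ε) (𝓝[>] 0) atTop := by
  simpa only [div_eq_mul_inv] using tendsto_inv_nhdsGT_zero.const_mul_atTop hc

lemma tendsto_rpow_mul_exp_neg_div_nhdsGT_zero (s : ℝ) {c : ℝ} (hc : 0 < c) :
    Tendsto (fun ε : ℝ => ε ^ s * exp (-(c / ε))) (𝓝[>] 0) (𝓝 0) := by
  refine ((tendsto_rpow_mul_exp_neg_mul_atTop_nhds_zero (-s) c hc).comp
    tendsto_inv_nhdsGT_zero).congr' ?_
  filter_upwards [self_mem_nhdsWithin] with ε (hε : 0 < ε)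
  rw [Function.comp_apply, inv_rpow hε.le, rpow_neg hε.le, inv_inv, div_eq_mul_inv, neg_mul]

lemma exp_div_two_mul_cosh (x : ℝ) : exp x / (2 * cosh x) = (1 + exp (-x) ^ 2)⁻¹ := by
  rw [cosh_eq, exp_neg]
  field_simp

lemma tendsto_exp_div_two_mul_cosh_atTop :
    Tendsto (fun x : ℝ => exp x / (2 * cosh x)) atTop (𝓝 1) := by
  simp only [exp_div_two_mul_cosh]
  simpa using ((tendsto_exp_neg_atTop_nhds_zero.pow 2).const_add 1).inv₀ (by norm_num)

def lowerGamma (s T : ℝ) : ℝ := ∫ u in (0 : ℝ)..T, exp (-u) * u ^ (s - 1)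

lemma tendsto_lowerGamma_atTop {s : ℝ} (hs : 0 < s) :
    Tendsto (lowerGamma s) atTop (𝓝 (Gamma s)) := by
  rw [Gamma_eq_integral hs]
  exact intervalIntegral_tendsto_integral_Ioi 0 (GammaIntegral_convergent hs) tendsto_id

lemma integral_rpow_mul_exp_div {k h : ℝ} (hkh : k ≤ h) (ζ : ℝ) {ε : ℝ} (hε : 0 < ε) :
    ∫ y in k..h, (y - k) ^ ζ * exp ((h - y) / ε) =
      exp ((h - k) / ε) * ε ^ (ζ + 1) * lowerGamma (ζ + 1) ((h - k) / ε) := by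
  have hsub := intervalIntegral.integral_comp_mul_add
    (fun y => (y - k) ^ ζ * exp ((h - y) / ε)) hε.ne' (a := 0) (b := (h - k) / ε) k
  rw [mul_zero, zero_add, mul_div_cancel₀ _ hε.ne', sub_add_cancel, smul_eq_mul,
    eq_inv_mul_iff_mul_eq₀ hε.ne'] at hsub
  rw [← hsub, lowerGamma, add_sub_cancel_right, ← intervalIntegral.integral_const_mul,
    ← intervalIntegral.integral_const_mul]
  refine intervalIntegral.integral_congr fun u hu => ?_
  rw [uIcc_of_le (div_nonneg (sub_nonneg.2 hkh) hε.le)] at hu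
  have harg : (h - (ε * u + k)) / ε = (h - k) / ε + -u := by field_simp; ring
  simp only [add_sub_cancel_right, harg, exp_add, mul_rpow hε.le hu.1, rpow_add_one hε.ne']
  ring

lemma intervalIntegral_indicator_Ici {k h : ℝ} (hk : 0 < k) (hkh : k ≤ h) (g : ℝ → ℝ) :
    ∫ y in (0 : ℝ)..h, (Ici k).indicator g y = ∫ y in k..h, g y := by
  rw [intervalIntegral.integral_of_le (hk.le.trans hkh), intervalIntegral.integral_of_le hkh,
    integral_indicator measurableSet_Ici, ← integral_Icc_eq_integral_Ioc]
  have hset : Ici k ∩ Ioc 0 h = Icc k h :=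
    Set.ext fun _ => ⟨fun ⟨hky, _, hyh⟩ => ⟨hky, hyh⟩,
      fun ⟨hky, hyh⟩ => ⟨hky, hk.trans_le hky, hyh⟩⟩
  rw [Measure.restrict_restrict measurableSet_Ici, hset]

lemma integral_mul_sinh {a b : ℝ} {g φ : ℝ → ℝ} (hg : Continuous g) (hφ : Continuous φ) :
    ∫ y in a..b, g y * sinh (φ y) =
      ((∫ y in a..b, g y * exp (φ y)) - ∫ y in a..b, g y * exp (-φ y)) / 2 := by
  have hexp : Continuous fun y => g y * exp (φ y) := by fun_prop
  have hexp_neg : Continuous fun y => g y * exp (-φ y) := by fun_prop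
  rw [← intervalIntegral.integral_sub (hexp.intervalIntegrable a b)
    (hexp_neg.intervalIntegrable a b), ← intervalIntegral.integral_div]
  congr 1 with y
  rw [sinh_eq]
  ring

lemma norm_integral_rpow_mul_exp_neg_le {k h ζ ε : ℝ} (hkh : k ≤ h) (hζ : 0 ≤ ζ)
    (hε : 0 < ε) :
    ‖∫ y in k..h, (y - k) ^ ζ * exp (-((h - y) / ε))‖ ≤ ∫ y in k..h, (y - k) ^ ζ := by
  have hcont : Continuous fun y : ℝ => (y - k) ^ ζ :=
    (continuous_id.sub continuous_const).rpow_const fun _ => Or.inr hζ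
  refine intervalIntegral.norm_integral_le_of_norm_le hkh (.of_forall fun y hy => ?_)
    (hcont.intervalIntegrable k h)
  have hexp : exp (-((h - y) / ε)) ≤ 1 :=
    exp_le_one_iff.2 (neg_nonpos.2 (div_nonneg (sub_nonneg.2 hy.2) hε.le))
  rw [Real.norm_eq_abs, abs_mul, abs_of_nonneg (rpow_nonneg (sub_nonneg.2 hy.1.le) ζ),
    abs_of_pos (exp_pos _)]
  exact mul_le_of_le_one_right (rpow_nonneg (sub_nonneg.2 hy.1.le) ζ) hexp

lemma coeff_ratio_eq (α h k ζ P E G : ℝ) {ε : ℝ} (hε : 0 < ε) (hG : G ≠ 0) :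
    ((α + 1 / ε * ((exp ((h - k) / ε) * ε ^ (ζ + 1) * P - E) / 2)) / cosh (h / ε)) /
        (G * ε ^ ζ * exp (-k / ε)) =
      exp (h / ε) / (2 * cosh (h / ε)) *
        ((P + 2 * α * (ε ^ (-ζ) * exp (-((h - k) / ε))) -
          E * (ε ^ (-(ζ + 1)) * exp (-((h - k) / ε)))) / G) := by
  have hexp : exp ((h - k) / ε) = exp (h / ε) / exp (k / ε) := by rw [← exp_sub, sub_div]
  have hexp_neg : exp (-((h - k) / ε)) = exp (k / ε) / exp (h / ε) := by
    rw [← exp_sub]; ring_nf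
  have hexp_k : exp (-k / ε) = (exp (k / ε))⁻¹ := by rw [← exp_neg, neg_div]
  have hcosh : cosh (h / ε) ≠ 0 := (cosh_pos _).ne'
  have hεζ : ε ^ ζ ≠ 0 := (rpow_pos_of_pos hε ζ).ne'
  rw [hexp, hexp_neg, hexp_k, rpow_neg hε.le, rpow_neg hε.le, rpow_add_one hε.ne']
  field_simp
  ring

lemma integral_mul_sinh_eq {h k ζ : ℝ} (hk : 0 < k) (hkh : k ≤ h) (hζ : 0 ≤ ζ) {f : ℝ → ℝ}
    (hf : ∀ x : ℝ, f x = if |x| < k then 0 else (|x| - k) ^ ζ) {ε : ℝ} (hε : 0 < ε) :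
    ∫ y in (0 : ℝ)..h, f y * sinh ((h - y) / ε) =
      (exp ((h - k) / ε) * ε ^ (ζ + 1) * lowerGamma (ζ + 1) ((h - k) / ε) -
        ∫ y in k..h, (y - k) ^ ζ * exp (-((h - y) / ε))) / 2 := by
  have hf_indicator : EqOn (fun y => f y * sinh ((h - y) / ε))
      ((Ici k).indicator fun y => (y - k) ^ ζ * sinh ((h - y) / ε)) (uIcc 0 h) := by
    intro y hy
    rw [uIcc_of_le (hk.le.trans hkh)] at hy
    by_cases hyk : y < k
    · simp [hf, abs_of_nonneg hy.1, hyk]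
    · simp [hf, abs_of_nonneg hy.1, hyk, not_lt.1 hyk]
  have hpow : Continuous fun y : ℝ => (y - k) ^ ζ :=
    (continuous_id.sub continuous_const).rpow_const fun _ => Or.inr hζ
  rw [intervalIntegral.integral_congr hf_indicator, intervalIntegral_indicator_Ici hk hkh,
    integral_mul_sinh hpow (by fun_prop), integral_rpow_mul_exp_div hkh ζ hε]

theorem tendsto_coeff_ratio_nhdsGT_zero {h k ζ : ℝ} (α : ℝ) (hk : 0 < k) (hkh : k < h)
    (hζ : 0 ≤ ζ) {f : ℝ → ℝ} (hf : ∀ x : ℝ, f x = if |x| < k then 0 else (|x| - k) ^ ζ) :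
    Tendsto (fun ε : ℝ =>
        ((α + 1 / ε * ∫ y in (0 : ℝ)..h, f y * sinh ((h - y) / ε)) / cosh (h / ε)) /
          (Gamma (1 + ζ) * ε ^ ζ * exp (-k / ε)))
      (𝓝[>] 0) (𝓝 1) := by
  rw [add_comm 1 ζ]
  have hc : 0 < h - k := sub_pos.2 hkh
  have hΓ : Gamma (ζ + 1) ≠ 0 := (Gamma_pos_of_pos (by linarith)).ne'
  have hcosh := tendsto_exp_div_two_mul_cosh_atTop.comp
    (tendsto_const_div_nhdsGT_zero_atTop (hk.trans hkh))
  have hP := (tendsto_lowerGamma_atTop (by linarith : 0 < ζ + 1)).comp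
    (tendsto_const_div_nhdsGT_zero_atTop hc)
  have hα := (tendsto_rpow_mul_exp_neg_div_nhdsGT_zero (-ζ) hc).const_mul (2 * α)
  have hE : Tendsto (fun ε => (∫ y in k..h, (y - k) ^ ζ * exp (-((h - y) / ε))) *
      (ε ^ (-(ζ + 1)) * exp (-((h - k) / ε)))) (𝓝[>] 0) (𝓝 0) := by
    refine isBoundedUnder_le_mul_tendsto_zero
      (isBoundedUnder_of_eventually_le (a := ∫ y in k..h, (y - k) ^ ζ) ?_)
      (tendsto_rpow_mul_exp_neg_div_nhdsGT_zero _ hc)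
    filter_upwards [self_mem_nhdsWithin] with ε hε
    exact norm_integral_rpow_mul_exp_neg_le hkh.le hζ hε
  have hlim := hcosh.mul (((hP.add hα).sub hE).div_const (Gamma (ζ + 1)))
  rw [mul_zero, add_zero, sub_zero, div_self hΓ, mul_one] at hlim
  refine hlim.congr' ?_
  filter_upwards [self_mem_nhdsWithin] with ε hε
  rw [integral_mul_sinh_eq hk hkh.le hζ hf hε]
  exact (coeff_ratio_eq α h k ζ _ _ _ hε hΓ).symm

lemma tendsto_sqrt_nhdsGT_zero : Tendsto sqrt (𝓝[>] 0) (𝓝[>] 0) := by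
  have := (continuous_sqrt.continuousWithinAt (x := 0)).tendsto_nhdsWithin
    (t := Ioi 0) fun _ => sqrt_pos.2
  rwa [sqrt_zero] at this

theorem stmt5_general (h α k ζ : ℝ) (hk0 : 0 < k) (hkh : k < h)
    (hζ : 0 ≤ ζ)
    (f : ℝ → ℝ) (hf : ∀ x : ℝ, f x = if |x| < k then 0 else (|x| - k) ^ ζ)
    (γ : ℝ → ℝ)
    (hγ : ∀ a : ℝ, 0 < a → γ a =
      (α + (1 / Real.sqrt a) *
        ∫ y in (0 : ℝ)..h, f y * Real.sinh ((h - y) / Real.sqrt a)) /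
      Real.cosh (h / Real.sqrt a)) :
    Tendsto (fun a : ℝ =>
        γ a / (Real.Gamma (1 + ζ) * a ^ (ζ / 2) * Real.exp (-k / Real.sqrt a)))
      (𝓝[>] (0 : ℝ)) (𝓝 1) := by
  refine ((tendsto_coeff_ratio_nhdsGT_zero α hk0 hkh hζ hf).comp
    tendsto_sqrt_nhdsGT_zero).congr' ?_
  filter_upwards [self_mem_nhdsWithin] with a (ha : 0 < a)
  rw [Function.comp_apply, hγ a ha, rpow_div_two_eq_sqrt ζ ha.le]

/-- Example 1.1, asymptotics of the coefficient: with
`f(x) = 0` for `|x| < k` and `f(x) = (|x|-k)^ζ` for `|x| ≥ k`, the coefficient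
`γ_a = (α + (1/√a) ∫₀ʰ f(y) sinh((h-y)/√a) dy) / cosh(h/√a)` satisfies
`γ_a ~ Γ(1+ζ) a^{ζ/2} e^{-k/√a}` as `a → 0⁺`. -/
theorem stmt5 (h α k ζ : ℝ) (hh : 0 < h) (hα : 0 < α) (hk0 : 0 < k) (hkh : k < h)
    (hζ : 0 ≤ ζ)
    (f : ℝ → ℝ) (hf : ∀ x : ℝ, f x = if |x| < k then 0 else (|x| - k) ^ ζ)
    (γ : ℝ → ℝ)
    (hγ : ∀ a : ℝ, 0 < a → γ a =
      (α + (1 / Real.sqrt a) *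
        ∫ y in (0 : ℝ)..h, f y * Real.sinh ((h - y) / Real.sqrt a)) /
      Real.cosh (h / Real.sqrt a)) :
    Tendsto (fun a : ℝ =>
        γ a / (Real.Gamma (1 + ζ) * a ^ (ζ / 2) * Real.exp (-k / Real.sqrt a)))
      (𝓝[>] (0 : ℝ)) (𝓝 1) :=
  stmt5_general h α k ζ hk0 hkh hζ f hf γ hγ
end
end

section
/- Let a, h, α > 0, 0 < k < h, ζ ≥ 0, and f(x) := 0 for |x| < k and f(x) := (|x| − k)^ζ for k ≤ |x| < h. Let u_a be the unique solution of −a·u_a'' + u_a = f on (−h, h) with u_a(−h) = u_a(h) = α. Then, uniformly on [−k, k], −√a·log u_a(x) = (k − |x|) + O(√a·log(1/a)) as a → 0⁺; that is, there exist C > 0 and a₀ > 0 such that sup_{|x|≤k} | −√a·log u_a(x) − (k − |x|) | ≤ C·√a·log(1/a) for all 0 < a < a₀. -/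
/-!
With `s = √a`, the layers `exp ((x - q) / s)` and `exp ((p - x) / s)` solve `-s² φ'' + φ = 0`, so
the maximum principle compares `u` with barriers `c + A (exp ((x - q) / s) + exp ((p - x) / s))`
on subintervals. Since `f ≥ s ^ ζ` on `|x| ≥ k + s`, such a barrier gives `u (±(k + 2s)) ≳ s ^ ζ`;
inside the zero set `u` is then trapped between `s ^ ζ exp ((|x| - k) / s)` and
`exp ((|x| - k) / s)` up to constants, and after taking `-s log` the factor `s ^ ζ` is the error
`ζ s log (1 / s) = O(√a log (1 / a))`.
-/

open Set Filter Real
open scoped Topology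

theorem nonpos_on_Icc_of_deriv2_pos {p q : ℝ} {w w' w'' : ℝ → ℝ}
    (hc : ContinuousOn w (Icc p q)) (hw : ∀ x ∈ Ioo p q, HasDerivAt w (w' x) x)
    (hw' : ∀ x ∈ Ioo p q, HasDerivAt w' (w'' x) x)
    (hpos : ∀ x ∈ Ioo p q, 0 < w x → 0 < w'' x) (hp : w p ≤ 0) (hq : w q ≤ 0) :
    ∀ x ∈ Icc p q, w x ≤ 0 := by
  by_contra! ⟨x₀, hx₀, hwx₀⟩
  obtain ⟨c, hcI, hmax⟩ := isCompact_Icc.exists_isMaxOn ⟨x₀, hx₀⟩ hc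
  have hwc : 0 < w c := hwx₀.trans_le (hmax hx₀)
  have hc : c ∈ Ioo p q :=
    ⟨hcI.1.lt_of_ne (by rintro rfl; linarith), hcI.2.lt_of_ne (by rintro rfl; linarith)⟩
  obtain ⟨ε, hε, hball⟩ := Metric.eventually_nhds_iff_ball.1 <|
    Eventually.and (Ioo_mem_nhds hc.1 hc.2)
      ((hw c hc).continuousAt.eventually (eventually_gt_nhds hwc))
  -- `w'' > 0` wherever `w > 0`, so `w` is strictly convex near the interior maximum `c`
  have hconv : StrictConvexOn ℝ (Metric.ball c ε) w := by
    refine strictConvexOn_of_deriv2_pos (convex_ball c ε)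
      (fun x hx => (hw x (hball x hx).1).continuousAt.continuousWithinAt) fun x hx => ?_
    rw [Metric.isOpen_ball.interior_eq] at hx
    obtain ⟨hxI, hwx⟩ := hball x hx
    have hderiv : deriv w =ᶠ[𝓝 x] w' :=
      eventually_of_mem (Ioo_mem_nhds hxI.1 hxI.2) fun y hy => (hw y hy).deriv
    rw [Function.iterate_succ_apply, Function.iterate_one,
      ((hw' x hxI).congr_of_eventuallyEq hderiv).deriv]
    exact hpos x hxI hwx
  have hl : c - ε / 2 ∈ Metric.ball c ε := by rw [Real.ball_eq_Ioo]; constructor <;> linarith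
  have hr : c + ε / 2 ∈ Metric.ball c ε := by rw [Real.ball_eq_Ioo]; constructor <;> linarith
  have hmid := hconv.2 hl hr (by linarith) (one_half_pos (α := ℝ)) one_half_pos (add_halves 1)
  rw [smul_eq_mul, smul_eq_mul, smul_eq_mul, smul_eq_mul,
    show (1 / 2 : ℝ) * (c - ε / 2) + 1 / 2 * (c + ε / 2) = c by ring] at hmid
  have hwl : w (c - ε / 2) ≤ w c := hmax (Ioo_subset_Icc_self (hball _ hl).1)
  have hwr : w (c + ε / 2) ≤ w c := hmax (Ioo_subset_Icc_self (hball _ hr).1)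
  linarith

def IsClassicalSolution (a : ℝ) (f u : ℝ → ℝ) (p q : ℝ) : Prop :=
  ContinuousOn u (Icc p q) ∧ ∃ u' u'' : ℝ → ℝ, ∀ x ∈ Ioo p q,
    HasDerivAt u (u' x) x ∧ HasDerivAt u' (u'' x) x ∧ -a * u'' x + u x = f x

namespace IsClassicalSolution

variable {a p q : ℝ} {f g u v : ℝ → ℝ}

theorem mono (hu : IsClassicalSolution a f u p q) {p' q' : ℝ} (hp : p ≤ p') (hq : q' ≤ q) :
    IsClassicalSolution a f u p' q' := by
  obtain ⟨hc, u', u'', hu⟩ := hu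
  exact ⟨hc.mono (Icc_subset_Icc hp hq), u', u'', fun x hx => hu x (Ioo_subset_Ioo hp hq hx)⟩

theorem le_of_forcing_le (ha : 0 < a) (hv : IsClassicalSolution a f v p q)
    (hu : IsClassicalSolution a g u p q) (hfg : ∀ x ∈ Ioo p q, f x ≤ g x)
    (hp : v p ≤ u p) (hq : v q ≤ u q) : ∀ x ∈ Icc p q, v x ≤ u x := by
  obtain ⟨hvc, v', v'', hv⟩ := hv
  obtain ⟨huc, u', u'', hu⟩ := hu
  have key := nonpos_on_Icc_of_deriv2_pos (w := v - u) (w' := v' - u') (w'' := v'' - u'')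
    (hvc.sub huc) (fun x hx => (hv x hx).1.sub (hu x hx).1)
    (fun x hx => (hv x hx).2.1.sub (hu x hx).2.1)
    (fun x hx hpos => pos_of_mul_pos_right (a := a) (by
      have := (hv x hx).2.2; have := (hu x hx).2.2; have := hfg x hx
      simp only [Pi.sub_apply] at hpos ⊢; nlinarith) ha.le)
    (sub_nonpos.2 hp) (sub_nonpos.2 hq)
  exact fun x hx => sub_nonpos.1 (key x hx)

end IsClassicalSolution

noncomputable def boundaryLayers (s p q x : ℝ) : ℝ := exp ((x - q) / s) + exp ((p - x) / s)

theorem hasDerivAt_boundaryLayers (s p q x : ℝ) :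
    HasDerivAt (boundaryLayers s p q) ((exp ((x - q) / s) - exp ((p - x) / s)) / s) x := by
  have h₁ := (((hasDerivAt_id x).sub_const q).div_const s).exp
  have h₂ := (((hasDerivAt_id x).const_sub p).div_const s).exp
  exact (h₁.add h₂).congr_deriv (by simp only [id]; ring)

theorem hasDerivAt_deriv_boundaryLayers {s : ℝ} (hs : s ≠ 0) (p q x : ℝ) :
    HasDerivAt (fun y => (exp ((y - q) / s) - exp ((p - y) / s)) / s)
      (boundaryLayers s p q x / s ^ 2) x := by
  have h₁ := (((hasDerivAt_id x).sub_const q).div_const s).exp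
  have h₂ := (((hasDerivAt_id x).const_sub p).div_const s).exp
  exact ((h₁.sub h₂).div_const s).congr_deriv (by simp only [boundaryLayers, id]; field_simp; ring)

theorem isClassicalSolution_barrier {s : ℝ} (hs : s ≠ 0) (c A p q : ℝ) :
    IsClassicalSolution (s ^ 2) (fun _ => c) (fun x => c + A * boundaryLayers s p q x) p q :=
  ⟨Continuous.continuousOn (by unfold boundaryLayers; fun_prop), _, _, fun x _ =>
    ⟨((hasDerivAt_boundaryLayers s p q x).const_mul A).const_add c,
      (hasDerivAt_deriv_boundaryLayers hs p q x).const_mul A, by field_simp; ring⟩⟩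

section BoundaryLayers
variable {s p q t x : ℝ}

theorem one_le_boundaryLayers (hs : 0 ≤ s) (hx : x ≤ p ∨ q ≤ x) : 1 ≤ boundaryLayers s p q x := by
  unfold boundaryLayers
  rcases hx with hx | hx
  · have : 1 ≤ exp ((p - x) / s) := one_le_exp (div_nonneg (by linarith) hs)
    linarith [exp_pos ((x - q) / s)]
  · have : 1 ≤ exp ((x - q) / s) := one_le_exp (div_nonneg (by linarith) hs)
    linarith [exp_pos ((p - x) / s)]

theorem boundaryLayers_le (hs : 0 < s) (hx : x ∈ Icc (p + t) (q - t)) :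
    boundaryLayers s p q x ≤ 2 * exp (-t / s) := by
  have h₁ : exp ((x - q) / s) ≤ exp (-t / s) :=
    exp_le_exp.2 (div_le_div_of_nonneg_right (by linarith [hx.2]) hs.le)
  have h₂ : exp ((p - x) / s) ≤ exp (-t / s) :=
    exp_le_exp.2 (div_le_div_of_nonneg_right (by linarith [hx.1]) hs.le)
  unfold boundaryLayers
  linarith

theorem exp_abs_sub_le_boundaryLayers (s r x : ℝ) :
    exp ((|x| - r) / s) ≤ boundaryLayers s (-r) r x := by
  unfold boundaryLayers
  rcases abs_cases x with ⟨hx, -⟩ | ⟨hx, -⟩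
  · rw [hx]; linarith [exp_pos ((-r - x) / s)]
  · rw [hx, show -x - r = -r - x by ring]; linarith [exp_pos ((x - r) / s)]

end BoundaryLayers

theorem one_sub_two_mul_exp_neg_one_pos : 0 < 1 - 2 * exp (-1) := by
  have : 2 < exp 1 := by linarith [add_one_lt_exp one_ne_zero]
  rw [exp_neg, sub_pos, ← div_eq_mul_inv, div_lt_one (exp_pos 1)]
  exact this

namespace IsClassicalSolution

variable {s p q r c A : ℝ} {f u : ℝ → ℝ}

theorem barrier_le (hs : 0 < s) (hu : IsClassicalSolution (s ^ 2) f u p q)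
    (hf : ∀ x ∈ Ioo p q, c ≤ f x) (hp : c + A * boundaryLayers s p q p ≤ u p)
    (hq : c + A * boundaryLayers s p q q ≤ u q) :
    ∀ x ∈ Icc p q, c + A * boundaryLayers s p q x ≤ u x :=
  (isClassicalSolution_barrier hs.ne' c A p q).le_of_forcing_le (by positivity) hu hf hp hq

theorem le_barrier (hs : 0 < s) (hu : IsClassicalSolution (s ^ 2) f u p q)
    (hf : ∀ x ∈ Ioo p q, f x ≤ c) (hp : u p ≤ c + A * boundaryLayers s p q p)
    (hq : u q ≤ c + A * boundaryLayers s p q q) :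
    ∀ x ∈ Icc p q, u x ≤ c + A * boundaryLayers s p q x :=
  hu.le_of_forcing_le (by positivity) (isClassicalSolution_barrier hs.ne' c A p q) hf hp hq

theorem nonneg (hs : 0 < s) (hu : IsClassicalSolution (s ^ 2) f u p q)
    (hf : ∀ x ∈ Ioo p q, 0 ≤ f x) (hp : 0 ≤ u p) (hq : 0 ≤ u q) : ∀ x ∈ Icc p q, 0 ≤ u x := by
  simpa using hu.barrier_le hs (A := 0) hf (by simpa) (by simpa)

theorem le_const (hs : 0 < s) (hu : IsClassicalSolution (s ^ 2) f u p q)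
    (hf : ∀ x ∈ Ioo p q, f x ≤ c) (hp : u p ≤ c) (hq : u q ≤ c) : ∀ x ∈ Icc p q, u x ≤ c := by
  simpa using hu.le_barrier hs (A := 0) hf (by simpa) (by simpa)

theorem mul_le_of_le_forcing (hs : 0 < s) (hu : IsClassicalSolution (s ^ 2) f u p q)
    (hc : 0 ≤ c) (hf : ∀ x ∈ Ioo p q, c ≤ f x) (hp : 0 ≤ u p) (hq : 0 ≤ u q) :
    ∀ x ∈ Icc (p + s) (q - s), (1 - 2 * exp (-1)) * c ≤ u x := by
  intro x hx
  have hbarrier := hu.barrier_le hs (A := -c) hf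
    (by nlinarith [one_le_boundaryLayers (p := p) (q := q) hs.le (Or.inl le_rfl)])
    (by nlinarith [one_le_boundaryLayers (p := p) (q := q) hs.le (Or.inr le_rfl)])
    x ⟨by linarith [hx.1], by linarith [hx.2]⟩
  have hlayers := boundaryLayers_le hs hx
  rw [neg_div, div_self hs.ne'] at hlayers
  nlinarith

theorem half_mul_exp_le (hs : 0 < s) (hu : IsClassicalSolution (s ^ 2) f u (-r) r)
    (hf : ∀ x ∈ Ioo (-r) r, 0 ≤ f x) (hc : 0 ≤ c) (hl : c ≤ u (-r)) (hr : c ≤ u r) :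
    ∀ x ∈ Icc (-r) r, c / 2 * exp ((|x| - r) / s) ≤ u x := by
  intro x hx
  have hend : ∀ y ∈ ({-r, r} : Set ℝ), boundaryLayers s (-r) r y ≤ 2 := fun y hy => by
    simpa using boundaryLayers_le hs (t := 0) (x := y) (by
      rcases hy with rfl | rfl <;> constructor <;> linarith [hx.1.trans hx.2])
  have hbarrier := hu.barrier_le hs (c := 0) (A := c / 2) hf
    (by nlinarith [hend (-r) (by simp)]) (by nlinarith [hend r (by simp)]) x hx
  nlinarith [exp_abs_sub_le_boundaryLayers s r x]

theorem le_two_mul_exp (hs : 0 < s) (hu : IsClassicalSolution (s ^ 2) f u (-r) r)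
    (hf : ∀ x ∈ Ioo (-r) r, f x ≤ 0) (hc : 0 ≤ c) (hl : u (-r) ≤ c) (hr : u r ≤ c) :
    ∀ x ∈ Icc (-r) r, u x ≤ 2 * c * exp ((|x| - r) / s) := by
  intro x hx
  have hbarrier := hu.le_barrier hs (c := 0) (A := c) hf
    (by nlinarith [one_le_boundaryLayers (p := -r) (q := r) hs.le (Or.inl le_rfl)])
    (by nlinarith [one_le_boundaryLayers (p := -r) (q := r) hs.le (Or.inr le_rfl)]) x hx
  have hlayers := boundaryLayers_le (p := -r) (q := r) (t := r - |x|) (x := x) hs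
    ⟨by linarith [neg_abs_le x], by linarith [le_abs_self x]⟩
  rw [neg_sub] at hlayers
  nlinarith

end IsClassicalSolution

section ZeroSetEstimates

variable {s h k α ζ : ℝ} {f u : ℝ → ℝ}

theorem forcing_nonneg (hf : ∀ x : ℝ, f x = if |x| < k then 0 else (|x| - k) ^ ζ) (x : ℝ) :
    0 ≤ f x := by
  rw [hf]
  split_ifs with hx
  · exact le_rfl
  · exact rpow_nonneg (by linarith [not_lt.1 hx]) ζ

theorem forcing_le (hf : ∀ x : ℝ, f x = if |x| < k then 0 else (|x| - k) ^ ζ) (hζ : 0 ≤ ζ)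
    (hkh : k ≤ h) {x : ℝ} (hx : |x| ≤ h) : f x ≤ (h - k) ^ ζ := by
  rw [hf]
  split_ifs with hxk
  · exact rpow_nonneg (by linarith) ζ
  · exact rpow_le_rpow (by linarith [not_lt.1 hxk]) (by linarith) hζ

theorem rpow_le_forcing (hf : ∀ x : ℝ, f x = if |x| < k then 0 else (|x| - k) ^ ζ) (hζ : 0 ≤ ζ)
    (hs : 0 ≤ s) {x : ℝ} (hx : k + s ≤ |x|) : s ^ ζ ≤ f x := by
  rw [hf, if_neg (by linarith)]
  exact rpow_le_rpow hs (by linarith) hζ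

theorem lower_bound_on_zero_set (hs : 0 < s)
    (hf : ∀ x : ℝ, f x = if |x| < k then 0 else (|x| - k) ^ ζ) (hζ : 0 ≤ ζ)
    (hu : IsClassicalSolution (s ^ 2) f u (-h) h) (hl : u (-h) = α) (hr : u h = α)
    (h3s : 3 * s ≤ h - k) (hα : 0 ≤ α) {x : ℝ} (hx : |x| ≤ k) :
    (1 - 2 * exp (-1)) / (2 * exp 2) * s ^ ζ * exp ((|x| - k) / s) ≤ u x := by
  have hk : 0 ≤ k := (abs_nonneg x).trans hx
  have hnn := hu.nonneg hs (fun y _ => forcing_nonneg hf y) (hl ▸ hα) (hr ▸ hα)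
  have hright : (1 - 2 * exp (-1)) * s ^ ζ ≤ u (k + 2 * s) :=
    (hu.mono (by linarith : -h ≤ k + s) le_rfl).mul_le_of_le_forcing hs (by positivity)
      (fun y hy => rpow_le_forcing hf hζ hs.le
        (by rw [abs_of_pos (by linarith [hy.1])]; exact hy.1.le))
      (hnn _ ⟨by linarith, by linarith⟩) (hnn _ ⟨by linarith, le_rfl⟩) _ ⟨by linarith, by linarith⟩
  have hleft : (1 - 2 * exp (-1)) * s ^ ζ ≤ u (-(k + 2 * s)) :=
    (hu.mono le_rfl (by linarith : -(k + s) ≤ h)).mul_le_of_le_forcing hs (by positivity)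
      (fun y hy => rpow_le_forcing hf hζ hs.le
        (by rw [abs_of_neg (by linarith [hy.2])]; linarith [hy.2]))
      (hnn _ ⟨le_rfl, by linarith⟩) (hnn _ ⟨by linarith, by linarith⟩) _ ⟨by linarith, by linarith⟩
  have hcentral := (hu.mono (by linarith : -h ≤ -(k + 2 * s)) (by linarith)).half_mul_exp_le hs
    (fun y _ => forcing_nonneg hf y) (mul_nonneg one_sub_two_mul_exp_neg_one_pos.le (by positivity))
    hleft hright x ⟨by linarith [neg_abs_le x], by linarith [le_abs_self x]⟩
  calc (1 - 2 * exp (-1)) / (2 * exp 2) * s ^ ζ * exp ((|x| - k) / s)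
      = (1 - 2 * exp (-1)) * s ^ ζ / 2 * exp ((|x| - (k + 2 * s)) / s) := by
        rw [show (|x| - (k + 2 * s)) / s = (|x| - k) / s - 2 by field_simp; ring, exp_sub]
        field_simp
    _ ≤ u x := hcentral

theorem upper_bound_on_zero_set (hs : 0 < s)
    (hf : ∀ x : ℝ, f x = if |x| < k then 0 else (|x| - k) ^ ζ) (hζ : 0 ≤ ζ)
    (hu : IsClassicalSolution (s ^ 2) f u (-h) h) (hl : u (-h) = α) (hr : u h = α)
    (hkh : k ≤ h) {x : ℝ} (hx : |x| ≤ k) :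
    u x ≤ 2 * max α ((h - k) ^ ζ) * exp ((|x| - k) / s) := by
  have hk : 0 ≤ k := (abs_nonneg x).trans hx
  have hbound := hu.le_const hs
    (fun y hy => (forcing_le hf hζ hkh (abs_le.2 ⟨hy.1.le, hy.2.le⟩)).trans (le_max_right _ _))
    (hl.trans_le (le_max_left _ _)) (hr.trans_le (le_max_left _ _))
  exact (hu.mono (by linarith) (by linarith)).le_two_mul_exp hs
    (fun y hy => by rw [hf, if_pos (abs_lt.2 hy)])
    (le_max_of_le_right (rpow_nonneg (by linarith) ζ))
    (hbound _ ⟨by linarith, by linarith⟩) (hbound _ ⟨by linarith, by linarith⟩) x (abs_le.1 hx)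

end ZeroSetEstimates

theorem abs_neg_mul_log_sub_le {s d m M y : ℝ} (hs : 0 < s) (hm : 0 < m)
    (hlo : m * exp (-d / s) ≤ y) (hhi : y ≤ M * exp (-d / s)) :
    |-s * log y - d| ≤ s * (|log m| + |log M|) := by
  have hy : 0 < y := (by positivity : 0 < m * exp (-d / s)).trans_le hlo
  have hM : 0 < M := pos_of_mul_pos_left (hy.trans_le hhi) (exp_pos _).le
  have hlog_lo := log_le_log (by positivity) hlo
  have hlog_hi := log_le_log hy hhi
  rw [log_mul hm.ne' (exp_pos _).ne', log_exp] at hlog_lo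
  rw [log_mul hM.ne' (exp_pos _).ne', log_exp] at hlog_hi
  have hd : s * (-d / s) = -d := by field_simp
  rw [abs_le]
  constructor
  · nlinarith [le_abs_self (log M), abs_nonneg (log m)]
  · nlinarith [neg_abs_le (log m), abs_nonneg (log M)]

theorem abs_log_mul_sqrt_rpow_le {a m ζ : ℝ} (ha : 0 < a) (ha₁ : a ≤ 1) (hm : 0 < m)
    (hζ : 0 ≤ ζ) : |log (m * √a ^ ζ)| ≤ |log m| + ζ * log (1 / a) := by
  have hlog_a : log a ≤ 0 := log_nonpos ha.le ha₁
  have hlog_sqrt : |log √a| ≤ log (1 / a) := by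
    rw [log_sqrt ha.le, one_div, log_inv, abs_div, abs_of_nonpos hlog_a, abs_two]
    linarith
  rw [log_mul hm.ne' (rpow_pos_of_pos (sqrt_pos.2 ha) ζ).ne', log_rpow (sqrt_pos.2 ha)]
  calc _ ≤ |log m| + |ζ * log √a| := abs_add_le _ _
    _ ≤ _ := by rw [abs_mul, abs_of_nonneg hζ]; gcongr

theorem stmt6_general (h α k ζ : ℝ) (hα : 0 < α) (hkh : k < h)
    (hζ : 0 ≤ ζ)
    (f : ℝ → ℝ) (hf : ∀ x : ℝ, f x = if |x| < k then 0 else (|x| - k) ^ ζ)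
    (u u' u'' : ℝ → ℝ → ℝ)
    (hucont : ∀ a : ℝ, 0 < a → ContinuousOn (u a) (Icc (-h) h))
    (hu : ∀ a : ℝ, 0 < a → ∀ x ∈ Ioo (-h) h, HasDerivAt (u a) (u' a x) x)
    (hu' : ∀ a : ℝ, 0 < a → ∀ x ∈ Ioo (-h) h, HasDerivAt (u' a) (u'' a x) x)
    (heq : ∀ a : ℝ, 0 < a → ∀ x ∈ Ioo (-h) h, -a * u'' a x + u a x = f x)
    (hbcl : ∀ a : ℝ, 0 < a → u a (-h) = α) (hbcr : ∀ a : ℝ, 0 < a → u a h = α) :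
    ∃ C : ℝ, 0 < C ∧ ∃ a₀ : ℝ, 0 < a₀ ∧ ∀ a : ℝ, 0 < a → a < a₀ →
      ∀ x : ℝ, |x| ≤ k →
        |(-Real.sqrt a * Real.log (u a x)) - (k - |x|)|
          ≤ C * Real.sqrt a * Real.log (1 / a) := by
  set m := (1 - 2 * exp (-1)) / (2 * exp 2)
  set M := max α ((h - k) ^ ζ)
  have hm : 0 < m := div_pos one_sub_two_mul_exp_neg_one_pos (by positivity)
  refine ⟨1 + |log m| + ζ + |log (2 * M)|, by positivity, min (exp (-1)) (((h - k) / 3) ^ 2),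
    by have := sub_pos.2 hkh; positivity, fun a ha ha₀ x hx => ?_⟩
  set s := √a
  have hs : 0 < s := sqrt_pos.2 ha
  have h3s : 3 * s ≤ h - k := by
    linarith [(sqrt_lt' (by linarith)).2 (ha₀.trans_le (min_le_right _ _))]
  have ha_lt : a < exp (-1) := ha₀.trans_le (min_le_left _ _)
  have hL : 1 ≤ log (1 / a) := by
    rw [one_div, log_inv, le_neg]; simpa using log_lt_log ha ha_lt |>.le
  have hsol : IsClassicalSolution (s ^ 2) f (u a) (-h) h := by
    rw [sq_sqrt ha.le]
    exact ⟨hucont a ha, u' a, u'' a, fun y hy => ⟨hu a ha y hy, hu' a ha y hy, heq a ha y hy⟩⟩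
  have hlo := lower_bound_on_zero_set hs hf hζ hsol (hbcl a ha) (hbcr a ha) h3s hα.le hx
  have hhi := upper_bound_on_zero_set hs hf hζ hsol (hbcl a ha) (hbcr a ha) hkh.le hx
  rw [← neg_sub k |x|] at hlo hhi
  calc _ ≤ s * (|log (m * s ^ ζ)| + |log (2 * M)|) :=
        abs_neg_mul_log_sub_le hs (mul_pos hm (rpow_pos_of_pos hs ζ)) hlo hhi
    _ ≤ s * (|log m| + ζ * log (1 / a) + |log (2 * M)|) := by
      gcongr
      exact abs_log_mul_sqrt_rpow_le ha (ha_lt.le.trans (exp_le_one_iff.2 (by norm_num))) hm hζ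
    _ ≤ _ := by
      nlinarith [mul_nonneg (abs_nonneg (log m)) (sub_nonneg.2 hL),
        mul_nonneg (abs_nonneg (log (2 * M))) (sub_nonneg.2 hL)]

/-- Example 1.1, conclusion: for the solutions `u_a` of `-a u'' + u = f` on `(-h,h)`,
`u_a(±h) = α`, with `f(x) = 0` for `|x| < k` and `f(x) = (|x|-k)^ζ` for `|x| ≥ k`,
one has `-√a log u_a(x) = (k - |x|) + O(√a log(1/a))` uniformly on `[-k,k]`. -/
theorem stmt6 (h α k ζ : ℝ) (hh : 0 < h) (hα : 0 < α) (hk0 : 0 < k) (hkh : k < h)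
    (hζ : 0 ≤ ζ)
    (f : ℝ → ℝ) (hf : ∀ x : ℝ, f x = if |x| < k then 0 else (|x| - k) ^ ζ)
    (u u' u'' : ℝ → ℝ → ℝ)
    (hucont : ∀ a : ℝ, 0 < a → ContinuousOn (u a) (Icc (-h) h))
    (hu : ∀ a : ℝ, 0 < a → ∀ x ∈ Ioo (-h) h, HasDerivAt (u a) (u' a x) x)
    (hu' : ∀ a : ℝ, 0 < a → ∀ x ∈ Ioo (-h) h, HasDerivAt (u' a) (u'' a x) x)
    (heq : ∀ a : ℝ, 0 < a → ∀ x ∈ Ioo (-h) h, -a * u'' a x + u a x = f x)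
    (hbcl : ∀ a : ℝ, 0 < a → u a (-h) = α) (hbcr : ∀ a : ℝ, 0 < a → u a h = α) :
    ∃ C : ℝ, 0 < C ∧ ∃ a₀ : ℝ, 0 < a₀ ∧ ∀ a : ℝ, 0 < a → a < a₀ →
      ∀ x : ℝ, |x| ≤ k →
        |(-Real.sqrt a * Real.log (u a x)) - (k - |x|)|
          ≤ C * Real.sqrt a * Real.log (1 / a) :=
  stmt6_general h α k ζ hα hkh hζ f hf u u' u'' hucont hu hu' heq hbcl hbcr
end

section
/- Let A := B₁(0) ⊂ ℝ^N be the open unit ball, ζ ≥ 0, and f(x) := (max{|x|² − 1, 0})^ζ. Then for each p ∈ {1, 2} there exist constants 0 < c_p < C_p such that c_p·ε^{pζ} ≤ m_ε^y(f^p) ≤ C_p·ε^{pζ} for all sufficiently small ε > 0 and all y on the unit sphere ∂B₁(0); in particular, f satisfies 0 < inf_{0<ε<ε₀, y∈∂A} ε^{−ζp} m_ε^y(f^p) ≤ sup_{0<ε<ε₀, y∈∂A} ε^{−ζp} m_ε^y(f^p) < ∞ for some ε₀ > 0. -/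
open MeasureTheory Metric Set Filter Real
open scoped Topology ENNReal NNReal

noncomputable section

/-- `N`-dimensional Euclidean space. -/
abbrev Euc (N : ℕ) := EuclideanSpace ℝ (Fin N)

/-- Volume mean `m_ε^y(h)` of `h` over the ball `B_ε(y)`. -/
def vmean {N : ℕ} (ε : ℝ) (y : Euc N) (h : Euc N → ℝ) : ℝ :=
  ((volume (ball y ε)).toReal)⁻¹ * ∫ x in ball y ε, h x

/-!
Put `F_κ(x) = max(‖x‖² - 1, 0)^κ`, so that `f^p = F_{pζ}`. For `‖y‖ = 1` and `ε ≤ 1`, every point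
of `B_ε(y)` has `‖x‖² - 1 < 3ε`, which bounds the mean by `(3ε)^κ`. Conversely the ball
`B_{ε/4}((1 + ε/2) y)` lies in `B_ε(y)`, fills the fraction `4^{-N}` of its volume, and on it
`‖x‖² - 1 ≥ ε/2`; as `F_κ ≥ 0`, the mean is at least `4^{-N} (ε/2)^κ`.
-/

section VolumeMean

variable {N : ℕ} {ε : ℝ} {y : Euc N} {h : Euc N → ℝ}

lemma toReal_volume_ball_pos (hε : 0 < ε) : 0 < (volume (ball y ε)).toReal :=
  ENNReal.toReal_pos (measure_ball_pos volume y hε).ne' measure_ball_lt_top.ne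

lemma vmean_le_of_forall_le {b : ℝ} (hε : 0 < ε) (hint : IntegrableOn h (ball y ε))
    (hb : ∀ x ∈ ball y ε, h x ≤ b) : vmean ε y h ≤ b := by
  rw [vmean, inv_mul_le_iff₀ (toReal_volume_ball_pos hε)]
  calc ∫ x in ball y ε, h x ≤ ∫ _ in ball y ε, b :=
        setIntegral_mono_on hint (integrableOn_const measure_ball_lt_top.ne) measurableSet_ball hb
    _ = (volume (ball y ε)).toReal * b := by
        rw [setIntegral_const, smul_eq_mul, measureReal_def]

lemma toReal_volume_ball_eq_mul {z : Euc N} {r : ℝ} (hr : 0 < r) (hε : 0 < ε) :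
    (volume (ball z r)).toReal = (r / ε) ^ N * (volume (ball y ε)).toReal := by
  rw [Measure.addHaar_ball_of_pos _ _ hr, Measure.addHaar_ball_of_pos _ _ hε,
    finrank_euclideanSpace_fin, ENNReal.toReal_mul, ENNReal.toReal_mul,
    ENNReal.toReal_ofReal (by positivity), ENNReal.toReal_ofReal (by positivity), div_pow]
  field_simp

lemma mul_le_vmean_of_ball_subset {z : Euc N} {r a : ℝ} (hr : 0 < r) (hε : 0 < ε)
    (hsub : ball z r ⊆ ball y ε) (hint : IntegrableOn h (ball y ε))
    (hnonneg : ∀ x ∈ ball y ε, 0 ≤ h x) (ha : ∀ x ∈ ball z r, a ≤ h x) :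
    (r / ε) ^ N * a ≤ vmean ε y h := by
  rw [vmean, le_inv_mul_iff₀ (toReal_volume_ball_pos hε)]
  calc (volume (ball y ε)).toReal * ((r / ε) ^ N * a)
      = ∫ _ in ball z r, a := by
        rw [setIntegral_const, smul_eq_mul, measureReal_def, toReal_volume_ball_eq_mul hr hε]
        ring
    _ ≤ ∫ x in ball z r, h x :=
        setIntegral_mono_on (integrableOn_const measure_ball_lt_top.ne) (hint.mono_set hsub)
          measurableSet_ball ha
    _ ≤ ∫ x in ball y ε, h x :=
        setIntegral_mono_set hint ((ae_restrict_iff' measurableSet_ball).2 <|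
          Eventually.of_forall hnonneg) hsub.eventuallyLE

end VolumeMean

section RadialExcess

variable {E : Type*} [SeminormedAddCommGroup E]

def radialExcess (κ : ℝ) (x : E) : ℝ := max (‖x‖ ^ 2 - 1) 0 ^ κ

lemma radialExcess_nonneg (κ : ℝ) (x : E) : 0 ≤ radialExcess κ x :=
  rpow_nonneg (le_max_right _ _) _

lemma continuous_radialExcess {κ : ℝ} (hκ : 0 ≤ κ) : Continuous (radialExcess κ : E → ℝ) :=
  (continuous_rpow_const hκ).comp (by fun_prop)

lemma radialExcess_pow (ζ : ℝ) (p : ℕ) (x : E) :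
    radialExcess ζ x ^ p = radialExcess (ζ * p) x := by
  rw [radialExcess, radialExcess, ← rpow_natCast, ← rpow_mul (le_max_right _ _)]

variable {κ ε : ℝ} {x y : E}

lemma radialExcess_le_of_mem_ball (hκ : 0 ≤ κ) (hε : ε ≤ 1) (hy : ‖y‖ = 1)
    (hx : x ∈ ball y ε) : radialExcess κ x ≤ (3 * ε) ^ κ := by
  have hxy : ‖x‖ < 1 + ε := by
    calc ‖x‖ ≤ ‖y‖ + dist x y := dist_eq_norm x y ▸ norm_le_norm_add_norm_sub' x y
      _ < 1 + ε := by rw [hy]; linarith [mem_ball.1 hx]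
  have hε0 : 0 < ε := pos_of_mem_ball hx
  refine rpow_le_rpow (le_max_right _ _) (max_le ?_ (by linarith)) hκ
  nlinarith [norm_nonneg x]

variable [NormedSpace ℝ E]

lemma ball_smul_subset_ball (hε : 0 ≤ ε) (hy : ‖y‖ = 1) :
    ball ((1 + ε / 2) • y) (ε / 4) ⊆ ball y ε := by
  have hcenter : dist ((1 + ε / 2) • y) y = ε / 2 := by
    rw [dist_eq_norm, add_smul, one_smul, add_sub_cancel_left, norm_smul, hy, mul_one,
      norm_of_nonneg (by positivity)]
  exact ball_subset_ball' (by linarith)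

lemma le_radialExcess_of_mem_ball (hκ : 0 ≤ κ) (hε : 0 ≤ ε) (hy : ‖y‖ = 1)
    (hx : x ∈ ball ((1 + ε / 2) • y) (ε / 4)) : (ε / 2) ^ κ ≤ radialExcess κ x := by
  have hxy : 1 + ε / 4 ≤ ‖x‖ := by
    have hnorm : ‖(1 + ε / 2) • y‖ = 1 + ε / 2 := by
      rw [norm_smul, hy, mul_one, norm_of_nonneg (by positivity)]
    have := norm_sub_norm_le ((1 + ε / 2) • y) x
    rw [hnorm, norm_sub_rev, ← dist_eq_norm] at this
    linarith [mem_ball.1 hx]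
  refine rpow_le_rpow (by positivity) (le_max_of_le_left ?_) hκ
  nlinarith

end RadialExcess

lemma vmean_radialExcess_mem_Icc {N : ℕ} {κ ε : ℝ} {y : Euc N} (hκ : 0 ≤ κ) (hε : 0 < ε)
    (hε₁ : ε ≤ 1) (hy : ‖y‖ = 1) :
    vmean ε y (radialExcess κ) ∈ Icc ((4 : ℝ)⁻¹ ^ N * (2 : ℝ)⁻¹ ^ κ * ε ^ κ) (3 ^ κ * ε ^ κ) := by
  have hint : IntegrableOn (radialExcess κ) (ball y ε) :=
    ((continuous_radialExcess hκ).locallyIntegrable.integrableOn_isCompact (isCompact_closedBall y ε)).mono_set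
      ball_subset_closedBall
  constructor
  · have hlower := mul_le_vmean_of_ball_subset (by positivity) hε
      (ball_smul_subset_ball hε.le hy) hint (fun x _ => radialExcess_nonneg κ x)
      (fun x hx => le_radialExcess_of_mem_ball hκ hε.le hy hx)
    rwa [div_div_cancel_left' hε.ne', div_eq_inv_mul ε, mul_rpow (by norm_num) hε.le, ← mul_assoc] at hlower
  · rw [← mul_rpow (by norm_num) hε.le]
    exact vmean_le_of_forall_le hε hint
      (fun x hx => radialExcess_le_of_mem_ball hκ hε₁ hy hx)

/-- Example 3.3: for `A = B₁(0)` and `f(x) = (max(|x|² - 1, 0))^ζ`, for each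
`p ∈ {1,2}` there are `0 < c_p < C_p` with `c_p ε^{pζ} ≤ m_ε^y(f^p) ≤ C_p ε^{pζ}`
for all small `ε > 0` and all `y` on the unit sphere; in particular `f` satisfies the
mean-value condition (1.5) with exponent `ζ`. -/
theorem stmt19 {N : ℕ} (hN : 1 ≤ N) (ζ : ℝ) (hζ : 0 ≤ ζ)
    (f : Euc N → ℝ) (hf : ∀ x : Euc N, f x = max (‖x‖ ^ 2 - 1) 0 ^ ζ) :
    ∀ p ∈ ({1, 2} : Set ℕ),
      (∃ c C : ℝ, 0 < c ∧ c < C ∧ ∃ ε₁ : ℝ, 0 < ε₁ ∧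
        ∀ ε : ℝ, 0 < ε → ε < ε₁ → ∀ y ∈ Metric.sphere (0 : Euc N) 1,
          c * ε ^ ((p : ℝ) * ζ) ≤ vmean ε y (fun x => f x ^ p) ∧
          vmean ε y (fun x => f x ^ p) ≤ C * ε ^ ((p : ℝ) * ζ)) ∧
      (∃ ε₀ : ℝ, 0 < ε₀ ∧ ∃ c C : ℝ, 0 < c ∧
        ∀ ε : ℝ, 0 < ε → ε < ε₀ → ∀ y ∈ Metric.sphere (0 : Euc N) 1,
          c ≤ ε ^ (-(ζ * (p : ℝ))) * vmean ε y (fun x => f x ^ p) ∧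
          ε ^ (-(ζ * (p : ℝ))) * vmean ε y (fun x => f x ^ p) ≤ C) := by
  intro p _
  have hκ : 0 ≤ ζ * p := by positivity
  have hfp : (fun x => f x ^ p) = radialExcess (ζ * p) := by
    funext x
    rw [hf, ← radialExcess_pow, radialExcess]
  have hc : 0 < (4 : ℝ)⁻¹ ^ N * (2 : ℝ)⁻¹ ^ (ζ * p) := by positivity
  have hcC : (4 : ℝ)⁻¹ ^ N * (2 : ℝ)⁻¹ ^ (ζ * p) < 3 ^ (ζ * p) :=
    calc (4 : ℝ)⁻¹ ^ N * (2 : ℝ)⁻¹ ^ (ζ * p) < 1 * 1 :=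
          mul_lt_mul_of_lt_of_le_of_nonneg_of_pos (pow_lt_one₀ (by norm_num) (by norm_num)
            (by omega)) (rpow_le_one (by norm_num) (by norm_num) hκ) (by positivity) one_pos
      _ ≤ 3 ^ (ζ * p) := by rw [one_mul]; exact one_le_rpow (by norm_num) hκ
  have hbounds (ε : ℝ) (hε : 0 < ε) (hε₁ : ε < 1) (y : Euc N) (hy : y ∈ sphere 0 1) :=
    hfp ▸ vmean_radialExcess_mem_Icc hκ hε hε₁.le (mem_sphere_zero_iff_norm.1 hy)
  refine ⟨⟨_, _, hc, hcC, 1, one_pos, fun ε hε hε₁ y hy => mul_comm ζ (p : ℝ) ▸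
    hbounds ε hε hε₁ y hy⟩, 1, one_pos, _, 3 ^ (ζ * p), hc, fun ε hε hε₁ y hy => ?_⟩
  obtain ⟨hlower, hupper⟩ := hbounds ε hε hε₁ y hy
  have hεκ : 0 < ε ^ (ζ * p) := rpow_pos_of_pos hε _
  rw [rpow_neg hε.le, inv_mul_eq_div, le_div_iff₀ hεκ, div_le_iff₀ hεκ]
  exact ⟨hlower, hupper⟩
end
end
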